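/- Let (M^n, g) be a compact oriented Riemannian manifold, X a vector field satisfying (1/2)L_X g = 2(n-1)(σ - λ)g, with Hodge–de Rham decomposition X = ∇h + Y, div Y = 0. Then (1/2)L_Y g = 2(n-1)(σ - λ)g - Hess h, and (1/4)∫_M |L_Y g|² dv_g = ∫_M [ |Hess h|² - 4n(n-1)²(σ - λ)² ] dv_g. -/

import Mathlib

/-! Since `L_X g = 2 Hess h + L_Y g`, the soliton equation gives `½ L_Y g = a g - Hess h` with
`a = 2(n-1)(σ-λ)`. In an orthonormal frame `|a g - T|² = n a² - 2a tr T + |T|²`, and the trace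
identity `tr Hess h = n a` turns the pointwise norm into `|Hess h|² - n a²`; integrating gives the
second claim. -/

open MeasureTheory Finset

section FrameAlgebra

variable {ι : Type*} [Fintype ι] [DecidableEq ι]

theorem sum_sq_smul_id_sub (a : ℝ) (T : ι → ι → ℝ) :
    ∑ i, ∑ j, (a * (if i = j then 1 else 0) - T i j) ^ 2
      = Fintype.card ι * a ^ 2 - 2 * a * ∑ i, T i i + ∑ i, ∑ j, T i j ^ 2 := by
  have hexpand : ∀ i j, (a * (if i = j then 1 else 0) - T i j) ^ 2
      = (if i = j then a ^ 2 - 2 * a * T i i else 0) + T i j ^ 2 := by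
    intro i j
    split_ifs with hij
    · subst hij; ring
    · ring
  simp only [hexpand, sum_add_distrib, sum_ite_eq, mem_univ, if_true, sum_sub_distrib,
    ← mul_sum, sum_const, card_univ, nsmul_eq_mul]

theorem sum_sq_smul_id_sub_of_trace_eq {a : ℝ} {T : ι → ι → ℝ}
    (htr : ∑ i, T i i = Fintype.card ι * a) :
    ∑ i, ∑ j, (a * (if i = j then 1 else 0) - T i j) ^ 2
      = ∑ i, ∑ j, T i j ^ 2 - Fintype.card ι * a ^ 2 := by
  rw [sum_sq_smul_id_sub, htr]
  ring

end FrameAlgebra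

theorem stmt9_general {M : Type*} [MeasurableSpace M] (μ : Measure M)
    (n : ℕ) (σ : M → ℝ)
    (LXg LYg Lhg Hessh g₀ : M → Fin n → Fin n → ℝ) (lam : ℝ)
    -- soliton equation (1/2) L_X g = 2(n-1)(σ-λ) g:
    (hsol : ∀ x i j, (1 / 2) * LXg x i j = 2 * ((n : ℝ) - 1) * (σ x - lam) * g₀ x i j)
    -- orthonormal frame:
    (hframe : ∀ x i j, g₀ x i j = if i = j then 1 else 0)
    -- additivity of the Lie derivative along X = ∇h + Y:
    (hadd : ∀ x i j, LXg x i j = Lhg x i j + LYg x i j)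
    -- L_{∇h} g = 2 Hess h:
    (hLh : ∀ x i j, Lhg x i j = 2 * Hessh x i j)
    -- trace identity Δh = tr_g Hess h = 2n(n-1)(σ-λ)  (using div Y = 0):
    (htr : ∀ x, ∑ i, Hessh x i i = 2 * (n : ℝ) * ((n : ℝ) - 1) * (σ x - lam)) :
    (∀ x i j, (1 / 2) * LYg x i j
        = 2 * ((n : ℝ) - 1) * (σ x - lam) * g₀ x i j - Hessh x i j) ∧
      (1 / 4) * ∫ x, (∑ i, ∑ j, (LYg x i j) ^ 2) ∂μ
        = ∫ x, ((∑ i, ∑ j, (Hessh x i j) ^ 2)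
            - 4 * (n : ℝ) * ((n : ℝ) - 1) ^ 2 * (σ x - lam) ^ 2) ∂μ := by
  have hLY : ∀ x i j, LYg x i j
      = 2 * (2 * ((n : ℝ) - 1) * (σ x - lam) * g₀ x i j - Hessh x i j) := by
    intro x i j
    linarith [hsol x i j, hadd x i j, hLh x i j]
  refine ⟨fun x i j => by linarith [hLY x i j], ?_⟩
  have hpointwise : ∀ x, (1 / 4) * ∑ i, ∑ j, LYg x i j ^ 2
      = ∑ i, ∑ j, Hessh x i j ^ 2 - 4 * (n : ℝ) * ((n : ℝ) - 1) ^ 2 * (σ x - lam) ^ 2 := by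
    intro x
    have htrace : ∑ i, Hessh x i i
        = Fintype.card (Fin n) * (2 * ((n : ℝ) - 1) * (σ x - lam)) := by
      rw [htr, Fintype.card_fin]
      ring
    simp only [hLY, hframe, mul_pow, ← mul_sum, sum_sq_smul_id_sub_of_trace_eq htrace,
      Fintype.card_fin]
    ring
  rw [← integral_const_mul]
  exact integral_congr_ae (.of_forall hpointwise)

/-- Compact oriented Riemannian manifold, soliton equation
`(1/2) L_X g = 2(n-1)(σ-λ) g`, Hodge–de Rham decomposition `X = ∇h + Y`, `div Y = 0`.
Then `(1/2) L_Y g = 2(n-1)(σ-λ) g - Hess h` and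
`(1/4) ∫ |L_Y g|² = ∫ [ |Hess h|² - 4n(n-1)²(σ-λ)² ]`.
Written in an orthonormal frame; `L_X g = L_{∇h} g + L_Y g`, `L_{∇h} g = 2 Hess h`,
and `tr Hess h = Δh = 2n(n-1)(σ-λ)` (since `div Y = 0`) are hypotheses. -/
theorem stmt9 {M : Type*} [MeasurableSpace M] (μ : Measure M)
    (n : ℕ) (σ h : M → ℝ)
    (LXg LYg Lhg Hessh g₀ : M → Fin n → Fin n → ℝ) (lam : ℝ)
    -- soliton equation (1/2) L_X g = 2(n-1)(σ-λ) g: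
    (hsol : ∀ x i j, (1 / 2) * LXg x i j = 2 * ((n : ℝ) - 1) * (σ x - lam) * g₀ x i j)
    -- orthonormal frame:
    (hframe : ∀ x i j, g₀ x i j = if i = j then 1 else 0)
    -- additivity of the Lie derivative along X = ∇h + Y:
    (hadd : ∀ x i j, LXg x i j = Lhg x i j + LYg x i j)
    -- L_{∇h} g = 2 Hess h:
    (hLh : ∀ x i j, Lhg x i j = 2 * Hessh x i j)
    -- trace identity Δh = tr_g Hess h = 2n(n-1)(σ-λ)  (using div Y = 0):
    (htr : ∀ x, ∑ i, Hessh x i i = 2 * (n : ℝ) * ((n : ℝ) - 1) * (σ x - lam)) :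
    (∀ x i j, (1 / 2) * LYg x i j
        = 2 * ((n : ℝ) - 1) * (σ x - lam) * g₀ x i j - Hessh x i j) ∧
      (1 / 4) * ∫ x, (∑ i, ∑ j, (LYg x i j) ^ 2) ∂μ
        = ∫ x, ((∑ i, ∑ j, (Hessh x i j) ^ 2)
            - 4 * (n : ℝ) * ((n : ℝ) - 1) ^ 2 * (σ x - lam) ^ 2) ∂μ :=
  stmt9_general μ n σ LXg LYg Lhg Hessh g₀ lam hsol hframe hadd hLh htr
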